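/- Insecurity of the modified protocol from the Remark (the server can distinguish indices): for a database A = (a^1,…,a^ℓ) ∈ Σ^ℓ, define for each index i ∈ Fin ℓ the vector ψ^{(i)} ∈ ℂ^{Σ × (Fin ℓ → ZMod 2)} by ψ^{(i)}(x,q) = 2^{-r/2} · (-1)^{(x·a^i).val} if q(k) = x·a^k for all k ∈ Fin ℓ, and 0 otherwise. Then for any i, j ∈ Fin ℓ, the inner product ⟨ψ^{(i)}, ψ^{(j)}⟩ equals 1 if a^i = a^j and equals 0 if a^i ≠ a^j. In particular, if the items a^1,…,a^ℓ are pairwise distinct, the vectors ψ^{(1)},…,ψ^{(ℓ)} form an orthonormal family, so the server can recover the index i with probability one. -/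

import Mathlib

open scoped BigOperators

/-- The item set `Σ = {0,1}^r`, identified with functions `Fin r → ZMod 2`. -/
abbrev Sig (r : ℕ) := Fin r → ZMod 2

/-- Dot product `u · v = ∑ k, u k * v k` in `ZMod 2`. -/
def dot {r : ℕ} (u v : Sig r) : ZMod 2 := ∑ k, u k * v k

/-- The amplitude `2^{-r/2}` as a complex number. -/
noncomputable def amp (r : ℕ) : ℂ := ((Real.sqrt (2 ^ r) : ℝ) : ℂ)⁻¹

/-- The state `ψ^{(i)}` of the modified (insecure) protocol from the Remark, where
register `R'` is left in the state `|0⟩`. -/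
noncomputable def psiRemark (r ℓ : ℕ) (A : Fin ℓ → Sig r) (i : Fin ℓ) :
    Sig r × (Fin ℓ → ZMod 2) → ℂ := fun p =>
  if ∀ k : Fin ℓ, p.2 k = dot p.1 (A k)
  then amp r * (-1 : ℂ) ^ (dot p.1 (A i)).val else 0

/-! The query register of `ψ^{(i)}` is a function of `x` alone, so `⟨ψ^{(i)}, ψ^{(j)}⟩` collapses to
`2^{-r} ∑_x (-1)^{x·(a^j - a^i)}`. This is the sum of the additive character `x ↦ (-1)^{x·v}` of
`{0,1}^r` at `v = a^j - a^i`, which is `2^r` if `v = 0` and `0` otherwise. -/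

open Finset Matrix

noncomputable def signChar : AddChar (ZMod 2) ℂ :=
  AddChar.zmodChar 2 (by norm_num : (-1 : ℂ) ^ 2 = 1)

lemma signChar_apply (a : ZMod 2) : signChar a = (-1 : ℂ) ^ a.val := rfl

lemma signChar_one : signChar 1 = -1 := by
  simp [signChar_apply, ZMod.val_one]

section DotProduct

variable {ι : Type*} [Fintype ι]

noncomputable def dotSignChar (v : ι → ZMod 2) : AddChar (ι → ZMod 2) ℂ :=
  signChar.compAddMonoidHom (AddMonoidHom.mk' (· ⬝ᵥ v) fun x y => add_dotProduct x y v)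

lemma dotSignChar_apply (v x : ι → ZMod 2) : dotSignChar v x = signChar (x ⬝ᵥ v) := rfl

lemma dotSignChar_eq_zero_iff (v : ι → ZMod 2) : dotSignChar v = 0 ↔ v = 0 := by
  classical
  refine ⟨fun h => ?_, fun h => ?_⟩
  · funext k
    have hk : signChar (v k) = 1 := by
      simpa [dotSignChar_apply, single_dotProduct] using DFunLike.congr_fun h (Pi.single k 1)
    rcases (by decide : ∀ a : ZMod 2, a = 0 ∨ a = 1) (v k) with h0 | h1
    · exact h0
    · rw [h1, signChar_one] at hk; norm_num at hk
  · ext x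
    simp [dotSignChar_apply, h]

lemma sum_signChar_dotProduct [DecidableEq ι] (v : ι → ZMod 2) :
    ∑ x : ι → ZMod 2, signChar (x ⬝ᵥ v) = if v = 0 then 2 ^ Fintype.card ι else 0 := by
  split_ifs with hv
  · simp [hv]
  · exact AddChar.sum_eq_zero_iff_ne_zero.mpr ((dotSignChar_eq_zero_iff v).not.mpr hv)

end DotProduct

lemma dot_eq_dotProduct {r : ℕ} (u v : Sig r) : dot u v = u ⬝ᵥ v := rfl

lemma star_amp (r : ℕ) : starRingEnd ℂ (amp r) = amp r := by
  simp [amp]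

lemma amp_sq (r : ℕ) : amp r ^ 2 = ((2 : ℂ) ^ r)⁻¹ := by
  rw [amp, inv_pow, ← Complex.ofReal_pow, Real.sq_sqrt (by positivity)]
  push_cast
  rfl

lemma psiRemark_apply (r ℓ : ℕ) (A : Fin ℓ → Sig r) (i : Fin ℓ) (x : Sig r)
    (q : Fin ℓ → ZMod 2) :
    psiRemark r ℓ A i (x, q) =
      if q = (fun k => dot x (A k)) then amp r * signChar (dot x (A i)) else 0 := by
  simp only [psiRemark, funext_iff, signChar_apply]

lemma sum_star_psiRemark_mul_psiRemark (r ℓ : ℕ) (A : Fin ℓ → Sig r) (i j : Fin ℓ)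
    (x : Sig r) :
    ∑ q, starRingEnd ℂ (psiRemark r ℓ A i (x, q)) * psiRemark r ℓ A j (x, q) =
      amp r ^ 2 * signChar (dot x (A j - A i)) := by
  rw [Fintype.sum_eq_single (fun k => dot x (A k)) fun q hq => by simp [psiRemark_apply, hq]]
  simp only [psiRemark_apply, if_pos, dot_eq_dotProduct]
  rw [map_mul, star_amp, ← AddChar.map_neg_eq_conj, dotProduct_sub, sub_eq_neg_add,
    AddChar.map_add_eq_mul]
  ring

theorem stmt_11_general (r ℓ : ℕ) (A : Fin ℓ → Sig r)
    (i j : Fin ℓ) :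
    (∑ p : Sig r × (Fin ℓ → ZMod 2),
        (starRingEnd ℂ) (psiRemark r ℓ A i p) * psiRemark r ℓ A j p) =
      if A i = A j then 1 else 0 := by
  rw [Fintype.sum_prod_type]
  simp only [sum_star_psiRemark_mul_psiRemark, ← mul_sum, dot_eq_dotProduct]
  rw [sum_signChar_dotProduct, Fintype.card_fin]
  simp only [sub_eq_zero, eq_comm (a := A j)]
  split_ifs
  · rw [amp_sq, inv_mul_cancel₀ (by norm_num)]
  · rw [mul_zero]

/-- insecurity of the modified protocol from the Remark. The states
`ψ^{(i)}` and `ψ^{(j)}` have inner product `1` when `a^i = a^j` and `0` otherwise,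
so for pairwise-distinct items they are orthonormal and the server can recover the
index `i` with probability one. -/
theorem stmt_11 (r ℓ : ℕ) (hr : 0 < r) (hℓ : 0 < ℓ) (A : Fin ℓ → Sig r)
    (i j : Fin ℓ) :
    (∑ p : Sig r × (Fin ℓ → ZMod 2),
        (starRingEnd ℂ) (psiRemark r ℓ A i p) * psiRemark r ℓ A j p) =
      if A i = A j then 1 else 0 :=
  stmt_11_general r ℓ A i j
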